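/- Fix N ∈ ℕ, bounded functions c₁, …, c_N : (0,∞) → ℝ, and a function γ : (0,∞) → (0,∞). Then δ·[ Σ_{k=0}^∞ Σ_{n=1}^N c_n(δ)·e^{−(2k+1)nδ} − (1/(2π))·∬_{ℝ²} Σ_{n=1}^N c_n(δ)·(σ_δ^{(γ(δ))}(x,ξ))^n dx dξ ] → 0 as δ → 0+. -/

import Mathlib

/-!
Each mode `n` is computed in closed form. The eigenvalue side is a geometric series,
`Σ_k e^{-(2k+1)mδ} = 1 / (2 sinh mδ)`, and the Weyl-symbol side is a Gaussian integral: the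
quadratic form `γ⁻²x² + γ²ξ²` has determinant one, so `(1/2π)∬ σ^m = cosh(δ)^{-m} / (2m tanh δ)`.
Both are `1/(2mδ) + O(1)` as `δ → 0`, so `δ` times their difference tends to zero, and bounded
coefficients preserve this in the finite sum over `n`.
-/

open Real Filter Set MeasureTheory Topology

namespace Real

theorem tanh_pos {δ : ℝ} (hδ : 0 < δ) : 0 < tanh δ := by
  rw [tanh_eq_sinh_div_cosh]
  exact div_pos (sinh_pos_iff.mpr hδ) (cosh_pos δ)

theorem tendsto_sinh_mul_div_self (a : ℝ) :
    Tendsto (fun t => sinh (a * t) / t) (𝓝[≠] 0) (𝓝 a) := by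
  have h : HasDerivAt (fun t => sinh (a * t)) a 0 := by
    simpa using ((hasDerivAt_id (0 : ℝ)).const_mul a).sinh
  simpa [div_eq_inv_mul] using h.tendsto_slope_zero

theorem tendsto_tanh_div_self : Tendsto (fun t => tanh t / t) (𝓝[≠] 0) (𝓝 1) := by
  have hcosh : Tendsto cosh (𝓝[≠] 0) (𝓝 1) := by
    simpa using continuous_cosh.continuousAt.tendsto.mono_left (nhdsWithin_le_nhds (a := 0))
  have h := (tendsto_sinh_mul_div_self 1).div hcosh one_ne_zero
  simp only [one_mul, div_one] at h
  exact h.congr fun t => by rw [Pi.div_apply, tanh_eq_sinh_div_cosh, div_right_comm]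

theorem hasSum_exp_neg_odd_mul {a : ℝ} (ha : 0 < a) :
    HasSum (fun k : ℕ => exp (-((2 * k + 1) * a))) (2 * sinh a)⁻¹ := by
  have hr : exp (-(2 * a)) < 1 := exp_lt_one_iff.mpr (by linarith)
  have hterm : (fun k : ℕ => exp (-((2 * k + 1) * a))) =
      fun k => exp (-a) * exp (-(2 * a)) ^ k :=
    funext fun k => by rw [← exp_nat_mul, ← exp_add]; ring_nf
  have hsinh : 2 * sinh a = exp a * (1 - exp (-(2 * a))) := by
    rw [sinh_eq, mul_sub, ← exp_add]; ring_nf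
  rw [hterm, hsinh, mul_inv, ← exp_neg]
  exact (hasSum_geometric_of_lt_one (exp_nonneg _) hr).mul_left (exp (-a))

end Real

noncomputable def weylSymbol (δ g : ℝ) (p : ℝ × ℝ) : ℝ :=
  (cosh δ)⁻¹ * exp (-(tanh δ) * (g⁻¹ ^ 2 * p.1 ^ 2 + g ^ 2 * p.2 ^ 2))

theorem weylSymbol_pow (δ g : ℝ) (m : ℕ) (p : ℝ × ℝ) :
    weylSymbol δ g p ^ m = (cosh δ)⁻¹ ^ m *
      (exp (-(m * tanh δ * g⁻¹ ^ 2) * p.1 ^ 2) * exp (-(m * tanh δ * g ^ 2) * p.2 ^ 2)) := by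
  rw [weylSymbol, mul_pow, ← exp_nat_mul, ← exp_add]
  ring_nf

theorem integrable_weylSymbol_pow {δ g : ℝ} (hδ : 0 < δ) (hg : g ≠ 0) {m : ℕ} (hm : m ≠ 0) :
    Integrable (fun p => weylSymbol δ g p ^ m) := by
  have ht := tanh_pos hδ
  simp_rw [weylSymbol_pow]
  refine Integrable.const_mul ?_ _
  rw [Measure.volume_eq_prod]
  exact (integrable_exp_neg_mul_sq (by positivity)).mul_prod
    (integrable_exp_neg_mul_sq (by positivity))

theorem integral_weylSymbol_pow {δ g : ℝ} (hδ : 0 < δ) (hg : g ≠ 0) (m : ℕ) :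
    ∫ p, weylSymbol δ g p ^ m = (cosh δ)⁻¹ ^ m * (π / (m * tanh δ)) := by
  have ht := tanh_pos hδ
  simp_rw [weylSymbol_pow]
  rw [integral_const_mul, Measure.volume_eq_prod,
    integral_prod_mul (fun x => exp (-_ * x ^ 2)) (fun x => exp (-_ * x ^ 2)),
    integral_gaussian, integral_gaussian, ← sqrt_mul (by positivity)]
  have hdet :
      π / (m * tanh δ * g⁻¹ ^ 2) * (π / (m * tanh δ * g ^ 2)) = (π / (m * tanh δ)) ^ 2 := by
    field_simp
  rw [hdet, sqrt_sq (by positivity)]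

/-- `δ` times the difference between the eigenvalue sum `Σ_k λ_k^m = 1 / (2 sinh mδ)` and the
symbol integral `(1/2π)∬ σ^m`. -/
noncomputable def weylDefect (m : ℕ) (δ : ℝ) : ℝ :=
  δ * ((2 * sinh (m * δ))⁻¹ - (cosh δ)⁻¹ ^ m / (2 * m * tanh δ))

theorem tendsto_weylDefect {m : ℕ} (hm : m ≠ 0) : Tendsto (weylDefect m) (𝓝[≠] 0) (𝓝 0) := by
  have hm' : (m : ℝ) ≠ 0 := Nat.cast_ne_zero.mpr hm
  have hcosh : Tendsto (fun δ => (cosh δ)⁻¹ ^ m) (𝓝 0) (𝓝 1) := by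
    simpa using ((continuous_cosh.tendsto 0).inv₀ (cosh_pos 0).ne').pow m
  have h := (((tendsto_sinh_mul_div_self m).inv₀ hm').sub
    ((hcosh.mono_left nhdsWithin_le_nhds).mul
      ((tendsto_tanh_div_self.const_mul (m : ℝ)).inv₀ (by simpa using hm')))).div_const 2
  rw [mul_one, one_mul, sub_self, zero_div] at h
  refine h.congr' ?_
  filter_upwards [self_mem_nhdsWithin] with δ (hδ : δ ≠ 0)
  have hsinh : sinh (m * δ) ≠ 0 := sinh_ne_zero.mpr (mul_ne_zero hm' hδ)
  have htanh : tanh δ ≠ 0 := by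
    rw [tanh_eq_sinh_div_cosh]; exact div_ne_zero (sinh_ne_zero.mpr hδ) (cosh_pos δ).ne'
  rw [weylDefect]
  field_simp

theorem mul_sub_integral_eq_sum_weylDefect {N : ℕ} (c : Fin N → ℝ) {δ g : ℝ} (hδ : 0 < δ)
    (hg : g ≠ 0) :
    δ * ((∑' k : ℕ, ∑ n : Fin N, c n * exp (-((2 * (k : ℝ) + 1) * ((n : ℝ) + 1) * δ))) -
        (1 / (2 * π)) * ∫ p, ∑ n : Fin N, c n * weylSymbol δ g p ^ ((n : ℕ) + 1)) =
      ∑ n : Fin N, c n * weylDefect (n + 1) δ := by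
  have hsum : HasSum (fun k : ℕ => ∑ n : Fin N, c n * exp (-((2 * k + 1) * ((n : ℝ) + 1) * δ)))
      (∑ n : Fin N, c n * (2 * sinh (((n : ℝ) + 1) * δ))⁻¹) :=
    hasSum_sum fun n _ => by
      simpa only [mul_assoc] using (hasSum_exp_neg_odd_mul (by positivity)).mul_left (c n)
  rw [hsum.tsum_eq, integral_finsetSum _ fun n _ =>
    (integrable_weylSymbol_pow hδ hg (Nat.succ_ne_zero _)).const_mul _]
  simp only [integral_const_mul, integral_weylSymbol_pow hδ hg, Finset.mul_sum,
    ← Finset.sum_sub_distrib]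
  refine Finset.sum_congr rfl fun n _ => ?_
  have htanh := (tanh_pos hδ).ne'
  rw [weylDefect]
  push_cast
  field_simp

theorem szego_lemma_polynomial
    (N : ℕ) (c : Fin N → ℝ → ℝ)
    (hc : ∀ n : Fin N, ∃ M : ℝ, ∀ δ > 0, |c n δ| ≤ M)
    (γ : ℝ → ℝ) (hγ : ∀ δ > 0, 0 < γ δ) :
    Filter.Tendsto
      (fun δ : ℝ =>
        δ * ((∑' k : ℕ, ∑ n : Fin N,
            c n δ * Real.exp (-((2 * (k : ℝ) + 1) * ((n : ℝ) + 1) * δ))) -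
          (1 / (2 * π)) * ∫ p : ℝ × ℝ, ∑ n : Fin N,
            c n δ * ((Real.cosh δ)⁻¹ *
              Real.exp (-(Real.tanh δ) *
                ((γ δ)⁻¹ ^ 2 * p.1 ^ 2 + (γ δ) ^ 2 * p.2 ^ 2))) ^ ((n : ℕ) + 1)))
      (nhdsWithin 0 (Set.Ioi 0)) (nhds 0) := by
  have hmode (n : Fin N) :
      Tendsto (fun δ => c n δ * weylDefect (n + 1) δ) (𝓝[>] 0) (𝓝 0) := by
    obtain ⟨M, hM⟩ := hc n
    refine isBoundedUnder_le_mul_tendsto_zero (isBoundedUnder_of_eventually_le (a := M)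
      (eventually_nhdsWithin_of_forall fun δ hδ => (norm_eq_abs (c n δ)).trans_le (hM δ hδ))) ?_
    exact (tendsto_weylDefect (Nat.succ_ne_zero n)).mono_left
      (nhdsWithin_mono _ fun δ (hδ : 0 < δ) => hδ.ne')
  have hmodes : Tendsto (fun δ => ∑ n : Fin N, c n δ * weylDefect (n + 1) δ) (𝓝[>] 0) (𝓝 0) := by
    simpa using tendsto_finsetSum Finset.univ fun n _ => hmode n
  refine hmodes.congr' ?_
  filter_upwards [self_mem_nhdsWithin] with δ (hδ : 0 < δ)
  exact (mul_sub_integral_eq_sum_weylDefect (c · δ) hδ (hγ δ hδ).ne').symm
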